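/- Let a_1, …, a_d, a_{d+1}, a_{d+2} be points of ℝ^d such that τ = conv(a_1,…,a_d,a_{d+1}) and τ′ = conv(a_1,…,a_d,a_{d+2}) are two d-simplices sharing the common facet conv(a_1,…,a_d). Choose interior points p ∈ int(τ) and p′ ∈ int(τ′), and let D_τ (resp. D_{τ′}) be the d×(d+1) matrix with columns a_1 − p, …, a_d − p, a_{d+1} − p (resp. a_1 − p′, …, a_d − p′, a_{d+2} − p′). Let C be a real d×(d+2) matrix such that the submatrix C_τ formed by columns 1,…,d,d+1 and the submatrix C_{τ′} formed by columns 1,…,d,d+2 are both oriented. If minor(C_τ,i)·minor(D_τ,i) > 0 for all i ∈ {1,…,d+1}, then minor(C_{τ′},i)·minor(D_{τ′},i) < 0 for all i ∈ {1,…,d+1}. -/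

import Mathlib

/-!
The barycentric coordinates of `p'` form a positive vector in the kernel of `D_τ'`, and the signed
maximal minors of a `d × (d+1)` matrix of rank `d` span its kernel (Cramer's rule). Hence `D_τ'`
is oriented, and as `C_τ'` is oriented too, the products `minor(C_τ', i) * minor(D_τ', i)` all
have the same sign: it suffices to look at the last column. Deleting it leaves the same columns of
`C` in `C_τ` and `C_τ'`, while the last minors of `D_τ` and `D_τ'` are the values at `p` and `p'`
of the affine function `x ↦ det (a₁ - x, …, a_d - x)`, which vanishes on the common facet. The two
simplices meet only in that facet, so they lie on opposite sides of it, and these two values have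
opposite signs.
-/

open Matrix

noncomputable section

/-- The determinant of the square matrix obtained from a `d × (d+1)` matrix `M`
by deleting its `i`-th column. -/
def colMinor {d : ℕ} (M : Matrix (Fin d) (Fin (d + 1)) ℝ) (i : Fin (d + 1)) : ℝ :=
  (M.submatrix id i.succAbove).det

/-- A `d × (d+1)` real matrix is *oriented* if all the values `(-1)^i * minor(M, i)`
are nonzero and have the same sign. -/
def IsOriented {d : ℕ} (M : Matrix (Fin d) (Fin (d + 1)) ℝ) : Prop :=
  (∀ i : Fin (d + 1), 0 < (-1 : ℝ) ^ (i : ℕ) * colMinor M i) ∨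
  (∀ i : Fin (d + 1), (-1 : ℝ) ^ (i : ℕ) * colMinor M i < 0)

open Set Finset

section ColMinor

variable {d : ℕ}

theorem colMinor_congr {M N : Matrix (Fin d) (Fin (d + 1)) ℝ} {i : Fin (d + 1)}
    (h : ∀ r, ∀ j ≠ i, M r j = N r j) : colMinor M i = colMinor N i := by
  rw [colMinor, colMinor]
  congr 1
  ext r j
  exact h r _ (Fin.succAbove_ne i j)

theorem mulVec_signedColMinor_eq_zero (M : Matrix (Fin d) (Fin (d + 1)) ℝ) :
    M *ᵥ (fun i => (-1 : ℝ) ^ (i : ℕ) * colMinor M i) = 0 := by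
  funext r
  -- Laplace expansion along the first row of `M` with its row `r` repeated on top.
  let N : Matrix (Fin (d + 1)) (Fin (d + 1)) ℝ := of (Fin.cons (M r) M)
  have hN : N.det = 0 := det_zero_of_row_eq (Fin.succ_ne_zero r).symm rfl
  rw [det_succ_row_zero] at hN
  rw [Pi.zero_apply, ← hN, mulVec, dotProduct]
  exact sum_congr rfl fun j _ => by rw [mul_left_comm, ← mul_assoc]; rfl

theorem signedColMinor_mul_eq_of_mulVec_eq_zero {M : Matrix (Fin d) (Fin (d + 1)) ℝ}
    {w : Fin (d + 1) → ℝ} (hw : M *ᵥ w = 0) {i₀ : Fin (d + 1)}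
    (h₀ : colMinor M i₀ ≠ 0) (i : Fin (d + 1)) :
    (-1 : ℝ) ^ (i : ℕ) * colMinor M i * w i₀ =
      (-1 : ℝ) ^ (i₀ : ℕ) * colMinor M i₀ * w i := by
  set u : Fin (d + 1) → ℝ := fun k => (-1 : ℝ) ^ (k : ℕ) * colMinor M k
  set z : Fin (d + 1) → ℝ := w i₀ • u - u i₀ • w
  have hz₀ : z i₀ = 0 := by simp only [z, Pi.sub_apply, Pi.smul_apply, smul_eq_mul]; ring
  have hMz : M *ᵥ z = 0 := by
    simp only [z, mulVec_sub, mulVec_smul, u, mulVec_signedColMinor_eq_zero, hw,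
      smul_zero, sub_zero]
  have hz : z ∘ i₀.succAbove = 0 := by
    refine eq_zero_of_mulVec_eq_zero h₀ (funext fun r => ?_)
    have := congrFun hMz r
    simp only [mulVec, dotProduct, Fin.sum_univ_succAbove _ i₀, hz₀, mul_zero,
      zero_add] at this
    simpa only [mulVec, dotProduct, submatrix_apply, id, Function.comp_apply]
      using this
  have hzi : z i = 0 := by
    rcases eq_or_ne i i₀ with rfl | hi
    · exact hz₀
    · obtain ⟨j, rfl⟩ := Fin.exists_succAbove_eq hi
      exact congrFun hz j
  simp only [z, Pi.sub_apply, Pi.smul_apply, smul_eq_mul, sub_eq_zero] at hzi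
  linarith

theorem isOriented_of_mulVec_eq_zero {M : Matrix (Fin d) (Fin (d + 1)) ℝ}
    {w : Fin (d + 1) → ℝ} (hpos : ∀ i, 0 < w i) (hw : M *ᵥ w = 0) {i₀ : Fin (d + 1)}
    (h₀ : colMinor M i₀ ≠ 0) : IsOriented M := by
  have key := signedColMinor_mul_eq_of_mulVec_eq_zero hw h₀
  have hs₀ : (-1 : ℝ) ^ (i₀ : ℕ) * colMinor M i₀ ≠ 0 := mul_ne_zero (by simp) h₀
  rcases hs₀.lt_or_gt with hneg | hpos₀
  · exact Or.inr fun i => by nlinarith [key i, hpos i, hpos i₀]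
  · exact Or.inl fun i => by nlinarith [key i, hpos i, hpos i₀]

theorem colMinor_mul_colMinor_eq (M N : Matrix (Fin d) (Fin (d + 1)) ℝ) (i : Fin (d + 1)) :
    colMinor M i * colMinor N i =
      ((-1 : ℝ) ^ (i : ℕ) * colMinor M i) * ((-1 : ℝ) ^ (i : ℕ) * colMinor N i) := by
  rw [mul_mul_mul_comm, ← pow_add, ← two_mul, pow_mul, neg_one_sq, one_pow, one_mul]

theorem IsOriented.colMinor_mul_neg {M N : Matrix (Fin d) (Fin (d + 1)) ℝ}
    (hM : IsOriented M) (hN : IsOriented N) {i₀ : Fin (d + 1)}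
    (h₀ : colMinor M i₀ * colMinor N i₀ < 0) (i : Fin (d + 1)) :
    colMinor M i * colMinor N i < 0 := by
  rw [colMinor_mul_colMinor_eq] at h₀ ⊢
  rcases hM with hM | hM <;> rcases hN with hN | hN
  · nlinarith [hM i₀, hN i₀]
  · nlinarith [hM i, hN i]
  · nlinarith [hM i, hN i]
  · nlinarith [hM i₀, hN i₀]

end ColMinor

theorem Matrix.exists_affineMap_eq_det_sub_replicateCol {n R : Type*} [Fintype n] [DecidableEq n]
    [CommRing R] (N : Matrix n n R) :
    ∃ f : (n → R) →ᵃ[R] R, ∀ x, f x = (N - replicateCol n x).det := by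
  cases isEmpty_or_nonempty n
  · exact ⟨AffineMap.const R _ 1, fun x => by simp [det_isEmpty]⟩
  obtain ⟨j₀⟩ := ‹Nonempty n›
  -- Subtracting column `j₀` from the others leaves `x` in column `j₀` only.
  let K : Matrix n n R := of fun r j => N r j - N r j₀
  let L : (n → R) →ₗ[R] R := (LinearMap.proj j₀).comp (cramer K)
  refine ⟨AffineMap.const R _ (L fun r => N r j₀) - L.toAffineMap, fun x => ?_⟩
  have hcols : (N - replicateCol n x).det = (K.updateCol j₀ fun r => N r j₀ - x r).det := by
    rw [← det_transpose, ← det_transpose (K.updateCol _ _)]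
    refine det_eq_of_forall_row_eq_smul_add_const (fun j => if j = j₀ then 0 else 1) j₀
      (if_pos rfl) fun j r => ?_
    by_cases hj : j = j₀
    · subst hj; simp
    · simp [hj, K]
  rw [hcols, AffineMap.coe_sub, Pi.sub_apply, AffineMap.const_apply, LinearMap.coe_toAffineMap,
    ← map_sub]
  rfl

namespace AffineBasis

variable {ι : Type*}

theorem apply_eq_coord_mul_of_forall_ne [Fintype ι] {k V P : Type*} [Ring k] [AddCommGroup V]
    [Module k V] [AddTorsor V P] (B : AffineBasis ι k P) (f : P →ᵃ[k] k) {l : ι}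
    (hf : ∀ i ≠ l, f (B i) = 0) (x : P) : f x = B.coord l x * f (B l) := by
  classical
  rw [← B.affineCombination_coord_eq_self x,
    Finset.map_affineCombination _ _ _ (B.sum_coord_apply_eq_one x),
    Finset.affineCombination_eq_linear_combination _ _ _ (B.sum_coord_apply_eq_one x),
    B.affineCombination_coord_eq_self x, Finset.sum_eq_single l (fun i _ hi => ?_) (by simp)]
  · rfl
  · simp [hf i hi]

theorem coord_apply_centroid_of_nonempty [DecidableEq ι] {k V P : Type*} [DivisionRing k]
    [CharZero k] [AddCommGroup V] [Module k V] [AddTorsor V P] (B : AffineBasis ι k P)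
    {s : Finset ι} (hs : s.Nonempty) (i : ι) :
    B.coord i (s.centroid k B) = if i ∈ s then (#s : k)⁻¹ else 0 := by
  split_ifs with hi
  · exact B.coord_apply_centroid hi
  · exact B.coord_apply_combination_of_notMem hi (s.sum_centroidWeights_eq_one_of_nonempty k hs)

section Simplices

variable {V : Type*} [AddCommGroup V] [Module ℝ V]

theorem exists_mem_convexHull_inter_coord_pos [Fintype ι] [Nontrivial ι]
    (B B' : AffineBasis ι ℝ V) {l : ι} (hB : ∀ i ≠ l, B i = B' i)
    (ht : 0 ≤ B'.coord l (B l)) :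
    ∃ x ∈ convexHull ℝ (range B) ∩ convexHull ℝ (range B'), 0 < B.coord l x := by
  classical
  set m : ι → ℝ := fun i => B'.coord i (B l)
  set S : ℝ := ∑ i, |m i|
  have hS : ∀ i, -S ≤ m i := fun i =>
    neg_le_of_abs_le (single_le_sum (fun j _ => abs_nonneg (m j)) (mem_univ i))
  have hS0 : 0 ≤ S := sum_nonneg fun i _ => abs_nonneg (m i)
  -- Move from the barycentre `c` of the common facet towards `B l`. With `ε = w / (w + S)` the
  -- `B'`-coordinates off `l` become `(1 - ε) * w + ε * m i = ε * (S + m i) ≥ 0`.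
  set s := univ.erase l
  have hs : s.Nonempty := (exists_ne l).imp fun i hi => mem_erase.2 ⟨hi, mem_univ i⟩
  have hmem : ∀ {i}, i ∉ s → i = l := fun hi => by simpa [s] using hi
  set c := s.centroid ℝ B
  have hcB' : c = s.centroid ℝ B' :=
    affineCombination_congr _ (fun _ _ => rfl) fun i hi => hB i (ne_of_mem_erase hi)
  set w : ℝ := (#s : ℝ)⁻¹
  have hw : 0 < w := inv_pos.2 (Nat.cast_pos.2 hs.card_pos)
  have hwS : 0 < w + S := add_pos_of_pos_of_nonneg hw hS0
  set ε : ℝ := w / (w + S)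
  have hε : 0 < ε := div_pos hw hwS
  have hε1 : ε * (w + S) = w := div_mul_cancel₀ w hwS.ne'
  set x := AffineMap.lineMap c (B l) ε
  have hx : ∀ B₀ : AffineBasis ι ℝ V, ∀ i,
      B₀.coord i x = (1 - ε) * B₀.coord i c + ε * B₀.coord i (B l) := fun B₀ i => by
    rw [AffineMap.apply_lineMap, AffineMap.lineMap_apply_ring]
  refine ⟨x, ⟨?_, ?_⟩, ?_⟩
  · rw [B.convexHull_eq_nonneg_coord]
    intro i
    rw [hx, B.coord_apply_centroid_of_nonempty hs, B.coord_apply]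
    split_ifs <;> nlinarith [mul_nonneg hε.le hS0]
  · rw [B'.convexHull_eq_nonneg_coord]
    intro i
    rw [hx, hcB', B'.coord_apply_centroid_of_nonempty hs]
    split_ifs with hi
    · nlinarith [hS i]
    · rw [hmem hi]; nlinarith
  · rw [hx, B.coord_apply_centroid_of_nonempty hs, B.coord_apply_eq, if_neg (notMem_erase l _)]
    linarith

/-- Two simplices sharing the facet opposite to `l` and meeting only in it lie on opposite sides
of it. -/
theorem coord_apply_lt_zero_of_convexHull_inter_subset [Fintype ι] [Nontrivial ι] {κ : Type*}
    (B B' : AffineBasis ι ℝ V) {l : ι} (hB : ∀ i ≠ l, B i = B' i) (f : κ → ι)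
    (hf : ∀ j, f j ≠ l)
    (hinter : convexHull ℝ (range B) ∩ convexHull ℝ (range B') ⊆
      convexHull ℝ (range (B ∘ f))) :
    B'.coord l (B l) < 0 := by
  by_contra! ht
  obtain ⟨x, hx, hpos⟩ := B.exists_mem_convexHull_inter_coord_pos B' hB ht
  have hfacet : convexHull ℝ (range (B ∘ f)) ⊆ {x | B.coord l x = 0} :=
    convexHull_min (range_subset_iff.2 fun j => B.coord_apply_ne (hf j).symm)
      ((convex_singleton 0).affine_preimage _)
  exact hpos.ne' (hfacet (hinter hx))

end Simplices

def centeredAt {m : Type*} (B : AffineBasis ι ℝ (m → ℝ)) (x : m → ℝ) : Matrix m ι ℝ :=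
  of fun r i => B i r - x r

theorem mulVec_coord_eq_zero [Fintype ι] {m : Type*} (B : AffineBasis ι ℝ (m → ℝ))
    (x : m → ℝ) :
    B.centeredAt x *ᵥ (fun i => B.coord i x) = 0 := by
  funext r
  have hx := congrFun (B.linear_combination_coord_eq_self x) r
  simp only [Finset.sum_apply, Pi.smul_apply, smul_eq_mul] at hx
  simp only [centeredAt, mulVec, dotProduct, of_apply, Pi.zero_apply, sub_mul,
    Finset.sum_sub_distrib, ← Finset.mul_sum, B.sum_coord_apply_eq_one, mul_one]
  simp only [mul_comm (B _ r), hx, sub_self]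

/-- `colMinor (B.centeredAt x) (Fin.last d)` is an affine function of `x` vanishing on the common
facet, so its sign tells on which side of the facet `x` lies. -/
theorem colMinor_centeredAt_last_mul_neg {d : ℕ}
    (B B' : AffineBasis (Fin (d + 1)) ℝ (Fin d → ℝ)) (hB : ∀ i ≠ Fin.last d, B i = B' i)
    (hopp : B'.coord (Fin.last d) (B (Fin.last d)) < 0)
    {p p' : Fin d → ℝ} (hp : 0 < B.coord (Fin.last d) p) (hp' : 0 < B'.coord (Fin.last d) p')
    (h₀ : colMinor (B.centeredAt p) (Fin.last d) ≠ 0) :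
    colMinor (B.centeredAt p) (Fin.last d) * colMinor (B'.centeredAt p') (Fin.last d) < 0 := by
  set l := Fin.last d
  obtain ⟨F, hF⟩ :=
    exists_affineMap_eq_det_sub_replicateCol (of fun r j : Fin d => B' j.castSucc r)
  have hFB' : ∀ x, colMinor (B'.centeredAt x) l = F x := fun x => by
    rw [hF, colMinor]
    congr 1
    ext r j
    simp [l, centeredAt]
  have hFB : ∀ x, colMinor (B.centeredAt x) l = F x := fun x =>
    (colMinor_congr fun r j hj => by simp [centeredAt, hB j hj]).trans (hFB' x)
  have hF0 : ∀ x, F x = B'.coord l x * F (B' l) :=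
    B'.apply_eq_coord_mul_of_forall_ne F fun i hi => by
      obtain ⟨j, rfl⟩ := Fin.exists_castSucc_eq.2 hi
      rw [hF]
      exact det_eq_zero_of_column_eq_zero j fun r => by simp
  have hcoord : B'.coord l p = B.coord l p * B'.coord l (B l) :=
    B.apply_eq_coord_mul_of_forall_ne (B'.coord l)
      (fun i hi => by rw [hB i hi]; exact B'.coord_apply_ne hi.symm) p
  rw [hFB, hF0 p, hcoord] at h₀ ⊢
  rw [hFB', hF0 p']
  calc B.coord l p * B'.coord l (B l) * F (B' l) * (B'.coord l p' * F (B' l))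
      = B.coord l p * B'.coord l (B l) * B'.coord l p' * F (B' l) ^ 2 := by ring
    _ < 0 := mul_neg_of_neg_of_pos
        (mul_neg_of_neg_of_pos (mul_neg_of_pos_of_neg hp hopp) hp')
        (sq_pos_of_ne_zero (right_ne_zero_of_mul h₀))

end AffineBasis

def AffineIndependent.toAffineBasis {d : ℕ} {v : Fin (d + 1) → Fin d → ℝ}
    (hv : AffineIndependent ℝ v) : AffineBasis (Fin (d + 1)) ℝ (Fin d → ℝ) :=
  ⟨v, hv, hv.affineSpan_eq_top_iff_card_eq_finrank_add_one.2 (by simp)⟩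

theorem stmt6 (d : ℕ) (hd : 1 ≤ d) (b : Fin (d + 2) → Fin d → ℝ)
    (eτ eτ' : Fin (d + 1) → Fin (d + 2))
    (heτ : ∀ i, eτ i = i.castSucc)
    (heτ' : ∀ i : Fin (d + 1),
      eτ' i = if h : (i : ℕ) < d then (⟨(i : ℕ), by omega⟩ : Fin (d + 2)) else Fin.last (d + 1))
    (hτ : AffineIndependent ℝ (b ∘ eτ)) (hτ' : AffineIndependent ℝ (b ∘ eτ'))
    (hfacet : convexHull ℝ (Set.range (b ∘ eτ)) ∩ convexHull ℝ (Set.range (b ∘ eτ'))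
      = convexHull ℝ (Set.range fun i : Fin d => b i.castSucc.castSucc))
    (p p' : Fin d → ℝ)
    (hp : p ∈ interior (convexHull ℝ (Set.range (b ∘ eτ))))
    (hp' : p' ∈ interior (convexHull ℝ (Set.range (b ∘ eτ'))))
    (Dτ Dτ' : Matrix (Fin d) (Fin (d + 1)) ℝ)
    (hDτ : ∀ r i, Dτ r i = b (eτ i) r - p r)
    (hDτ' : ∀ r i, Dτ' r i = b (eτ' i) r - p' r)
    (C : Matrix (Fin d) (Fin (d + 2)) ℝ)
    (hCτ' : IsOriented (C.submatrix id eτ'))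
    (hsame : ∀ i, 0 < colMinor (C.submatrix id eτ) i * colMinor Dτ i) :
    ∀ i, colMinor (C.submatrix id eτ') i * colMinor Dτ' i < 0 := by
  set l := Fin.last d
  have hcommon : ∀ i ≠ l, eτ i = eτ' i := fun i hi => by
    obtain ⟨j, rfl⟩ := Fin.exists_castSucc_eq.2 hi
    simp [heτ, heτ', Fin.ext_iff]
  set B := hτ.toAffineBasis
  set B' := hτ'.toAffineBasis
  have hB : ∀ i ≠ l, B i = B' i := fun i hi => congrArg b (hcommon i hi)
  have hpos : p ∈ {x | ∀ i, 0 < B.coord i x} := B.interior_convexHull ▸ hp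
  have hpos' : p' ∈ {x | ∀ i, 0 < B'.coord i x} := B'.interior_convexHull ▸ hp'
  have : Nontrivial (Fin (d + 1)) := Fin.nontrivial_iff_two_le.2 (by omega)
  have hopp : B'.coord l (B l) < 0 :=
    B.coord_apply_lt_zero_of_convexHull_inter_subset B' hB Fin.castSucc
      (fun j => (Fin.castSucc_lt_last j).ne) (by
        rw [show ⇑B ∘ Fin.castSucc = fun j => b j.castSucc.castSucc from
          funext fun j => congrArg b (heτ _)]
        exact hfacet.subset)
  obtain rfl : Dτ = B.centeredAt p := Matrix.ext hDτ
  obtain rfl : Dτ' = B'.centeredAt p' := Matrix.ext hDτ'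
  have hD := B.colMinor_centeredAt_last_mul_neg B' hB hopp (hpos l) (hpos' l)
    (right_ne_zero_of_mul (hsame l).ne')
  have hC : colMinor (C.submatrix id eτ') l = colMinor (C.submatrix id eτ) l :=
    colMinor_congr fun r j hj => by simp [hcommon j hj]
  have hlast : colMinor (C.submatrix id eτ') l * colMinor (B'.centeredAt p') l < 0 := by
    rw [hC]
    nlinarith [mul_neg_of_pos_of_neg (hsame l) hD, sq_nonneg (colMinor (B.centeredAt p) l)]
  have hDτ'_oriented : IsOriented (B'.centeredAt p') :=
    isOriented_of_mulVec_eq_zero hpos' (B'.mulVec_coord_eq_zero p') (right_ne_zero_of_mul hlast.ne)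
  exact hCτ'.colMinor_mul_neg hDτ'_oriented hlast
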